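/- For every functor F in A = Fun(C, G), the canonical morphism φ_F : F → F^{++} is a pure monomorphism and F^{++} is a pure injective functor; consequently, every functor in A has a pure injective preenvelope. -/

import Mathlib

/-!
Transposition identifies maps `X ⟶ Y⁺` with maps `Y ⟶ X⁺`, objectwise and hence for functors
`X : C ⥤ G`, `Y : Cᵒᵖ ⥤ G`; the biduality map is the transpose of the identity. Consequently
`(φ_F)⁺` has the section "transpose of `𝟙 F⁺⁺`", and since `(-)⁺` turns cokernels into kernels
the dual of `0 → F → F⁺⁺ → coker φ_F → 0` splits; `φ_F` is mono because `J` is a cogenerator.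
Any dual `Y⁺` is pure injective: a map `K ⟶ Y⁺` transposes to `Y ⟶ K⁺`, which lifts along the
split epimorphism `E⁺ ⟶ K⁺` dual to a pure monomorphism `K ⟶ E`; transposing back extends it.
So `φ_F` is a pure monomorphism into a pure injective, which is a pure injective preenvelope.
-/

set_option linter.unusedSectionVars false

open CategoryTheory CategoryTheory.Limits CategoryTheory.MonoidalCategory
  CategoryTheory.MonoidalClosed

universe v u

namespace FlatFunctorsPaper

variable {G : Type u} [Category.{v} G] [Abelian G] [MonoidalCategory G]
  [SymmetricCategory G] [MonoidalClosed G] [MonoidalPreadditive G]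

/-- `X⁺ = [X, J]`, the internal hom into `J`. -/
noncomputable def pObj (J X : G) : G := (ihom X).obj J

/-- The contravariant functorial action of `(-)⁺ = [-, J]`. -/
noncomputable def pMap (J : G) {X Y : G} (f : X ⟶ Y) : pObj J Y ⟶ pObj J X :=
  (MonoidalClosed.pre f).app J

@[simp] lemma pMap_id (J X : G) : pMap J (𝟙 X) = 𝟙 (pObj J X) := by
  simp [pMap, pObj]

@[simp] lemma pMap_comp (J : G) {X Y Z : G} (f : X ⟶ Y) (g : Y ⟶ Z) :
    pMap J (f ≫ g) = pMap J g ≫ pMap J f := by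
  simp [pMap, pObj]

@[simp] lemma pMap_zero (J : G) (X Y : G) : pMap J (0 : X ⟶ Y) = 0 := by
  apply MonoidalClosed.uncurry_injective
  unfold pObj
  rw [pMap, MonoidalClosed.uncurry_pre, MonoidalClosed.uncurry_eq]
  simp

/-- The canonical biduality morphism `X ⟶ X⁺⁺` in `G`. -/
noncomputable def bid (J X : G) : X ⟶ pObj J (pObj J X) :=
  MonoidalClosed.curry ((β_ (pObj J X) X).hom ≫ (ihom.ev X).app J)

lemma bid_natural (J : G) {X Y : G} (f : X ⟶ Y) :
    f ≫ bid J Y = bid J X ≫ pMap J (pMap J f) := by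
  show f ≫ (MonoidalClosed.curry ((β_ ((ihom Y).obj J) Y).hom ≫ (ihom.ev Y).app J) :
      Y ⟶ (ihom ((ihom Y).obj J)).obj J) =
    MonoidalClosed.curry ((β_ ((ihom X).obj J) X).hom ≫ (ihom.ev X).app J) ≫
      (MonoidalClosed.pre ((MonoidalClosed.pre f).app J)).app J
  apply MonoidalClosed.uncurry_injective
  rw [MonoidalClosed.uncurry_natural_left, MonoidalClosed.uncurry_natural_left]
  rw [MonoidalClosed.uncurry_curry, MonoidalClosed.uncurry_pre]
  erw [whisker_exchange_assoc]
  erw [← MonoidalClosed.uncurry_eq, MonoidalClosed.uncurry_curry]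
  simp

section Dual

variable {D : Type v} [SmallCategory D]

/-- The objectwise dual `F⁺` of a functor `F : D ⥤ G`, a functor `Dᵒᵖ ⥤ G`. -/
@[simps] noncomputable def dObj (J : G) (F : D ⥤ G) : Dᵒᵖ ⥤ G where
  obj c := pObj J (F.obj c.unop)
  map f := pMap J (F.map f.unop)
  map_id c := by simp
  map_comp f g := by simp

/-- The dual of a natural transformation. -/
@[simps] noncomputable def dMap (J : G) {F F' : D ⥤ G} (η : F ⟶ F') :
    dObj J F' ⟶ dObj J F where
  app c := pMap J (η.app c.unop)
  naturality _ _ f := by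
    erw [dObj_map, dObj_map, ← pMap_comp, ← pMap_comp, NatTrans.naturality]

@[simp] lemma dMap_id (J : G) (F : D ⥤ G) : dMap J (𝟙 F) = 𝟙 (dObj J F) := by
  ext c; simp; rfl

@[simp] lemma dMap_comp (J : G) {F F' F'' : D ⥤ G} (α : F ⟶ F') (β : F' ⟶ F'') :
    dMap J (α ≫ β) = dMap J β ≫ dMap J α := by
  ext c; simp; rfl

@[simp] lemma dMap_zero (J : G) (F F' : D ⥤ G) : dMap J (0 : F ⟶ F') = 0 := by
  ext c; simp; rfl

/-- The double dual `F⁺⁺` of a functor `F : D ⥤ G`. -/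
noncomputable def ddObj (J : G) (F : D ⥤ G) : D ⥤ G := opOp D ⋙ dObj J (dObj J F)

/-- The canonical natural transformation `φ_F : F ⟶ F⁺⁺`. -/
noncomputable def phi (J : G) (F : D ⥤ G) : F ⟶ ddObj J F where
  app c := bid J (F.obj c)
  naturality _ _ f := bid_natural J (F.map f)

/-- The dual of a short exact sequence (short complex) of functors. -/
noncomputable def dSC (J : G) (S : ShortComplex (D ⥤ G)) : ShortComplex (Dᵒᵖ ⥤ G) :=
  ShortComplex.mk (dMap J S.g) (dMap J S.f) (by rw [← dMap_comp, S.zero, dMap_zero])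

/-- A short exact sequence of functors is *pure* if its dual splits. -/
def IsPure (J : G) (S : ShortComplex (D ⥤ G)) : Prop := Nonempty ((dSC J S).Splitting)

/-- A functor `F` is *flat* if every short exact sequence ending in `F` is pure. -/
def IsFlat (J : G) (F : D ⥤ G) : Prop :=
  ∀ ⦃K E : D ⥤ G⦄ (i : K ⟶ E) (p : E ⟶ F) (w : i ≫ p = 0),
    (ShortComplex.mk i p w).ShortExact → IsPure J (ShortComplex.mk i p w)

/-- A functor `X` is *cotorsion* if every short exact sequence `0 → X → E → F → 0`
with `F` flat splits. -/
def IsCotorsion (J : G) (X : D ⥤ G) : Prop :=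
  ∀ ⦃E F : D ⥤ G⦄ (i : X ⟶ E) (p : E ⟶ F) (w : i ≫ p = 0),
    (ShortComplex.mk i p w).ShortExact → IsFlat J F →
      Nonempty (ShortComplex.mk i p w).Splitting

/-- A functor `P` is *pure injective* if every morphism into `P` extends along
pure monomorphisms. -/
def IsPureInjective (J : G) (P : D ⥤ G) : Prop :=
  ∀ ⦃K E L : D ⥤ G⦄ (i : K ⟶ E) (p : E ⟶ L) (w : i ≫ p = 0),
    (ShortComplex.mk i p w).ShortExact → IsPure J (ShortComplex.mk i p w) →
      ∀ f : K ⟶ P, ∃ h : E ⟶ P, i ≫ h = f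

end Dual

section ObjectLevel

/-- The dual of a short exact sequence (short complex) in `G`. -/
noncomputable def dSCG (J : G) (S : ShortComplex G) : ShortComplex G :=
  ShortComplex.mk (pMap J S.g) (pMap J S.f) (by rw [← pMap_comp, S.zero, pMap_zero])

/-- A short exact sequence in `G` is *pure* if its dual splits. -/
def IsPureG (J : G) (S : ShortComplex G) : Prop := Nonempty ((dSCG J S).Splitting)

/-- An object `X` of `G` is *flat* if every short exact sequence ending in `X` is pure. -/
def IsFlatG (J X : G) : Prop :=
  ∀ ⦃K E : G⦄ (i : K ⟶ E) (p : E ⟶ X) (w : i ≫ p = 0),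
    (ShortComplex.mk i p w).ShortExact → IsPureG J (ShortComplex.mk i p w)

/-- An object `X` of `G` is *cotorsion* if every short exact sequence
`0 → X → E → F → 0` with `F` flat splits. -/
def IsCotorsionG (J X : G) : Prop :=
  ∀ ⦃E F : G⦄ (i : X ⟶ E) (p : E ⟶ F) (w : i ≫ p = 0),
    (ShortComplex.mk i p w).ShortExact → IsFlatG J F →
      Nonempty (ShortComplex.mk i p w).Splitting

/-- The flat objects and the cotorsion objects form a complete cotorsion theory in `G`:
every object has a special flat precover and a special cotorsion preenvelope. -/
def CompleteFlatCotorsionTheoryG (J : G) : Prop :=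
  ∀ X : G,
    (∃ (Cx F : G) (i : Cx ⟶ F) (p : F ⟶ X) (w : i ≫ p = 0),
      (ShortComplex.mk i p w).ShortExact ∧ IsFlatG J F ∧ IsCotorsionG J Cx) ∧
    (∃ (Cx F : G) (i : X ⟶ Cx) (p : Cx ⟶ F) (w : i ≫ p = 0),
      (ShortComplex.mk i p w).ShortExact ∧ IsCotorsionG J Cx ∧ IsFlatG J F)

end ObjectLevel

section Complexes

variable {D : Type v} [SmallCategory D]

/-- A *flat complex*: an acyclic complex of flat functors all of whose kernels of
differentials are flat (equivalently, a pure acyclic complex of flat functors). -/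
def IsFlatComplex (J : G) (X : CochainComplex (D ⥤ G) ℤ) : Prop :=
  (∀ n, X.ExactAt n) ∧ (∀ n, IsFlat J (X.X n)) ∧
    ∀ n : ℤ, IsFlat J (kernel (X.d n (n + 1)))

/-- A *cotorsion complex*: an acyclic complex of cotorsion functors all of whose
kernels of differentials are cotorsion. -/
def IsCotorsionComplex (J : G) (X : CochainComplex (D ⥤ G) ℤ) : Prop :=
  (∀ n, X.ExactAt n) ∧ (∀ n, IsCotorsion J (X.X n)) ∧
    ∀ n : ℤ, IsCotorsion J (kernel (X.d n (n + 1)))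

/-- A complex is *dg-cotorsion* if every short exact sequence of complexes
`0 → X → E → F → 0` with `F` a flat complex splits. -/
def IsDgCotorsion (J : G) (X : CochainComplex (D ⥤ G) ℤ) : Prop :=
  ∀ ⦃E F : CochainComplex (D ⥤ G) ℤ⦄ (i : X ⟶ E) (p : E ⟶ F) (w : i ≫ p = 0),
    (ShortComplex.mk i p w).ShortExact → IsFlatComplex J F →
      Nonempty (ShortComplex.mk i p w).Splitting

end Complexes

section Transpose

variable (J : G)

noncomputable def pTranspose {X Y : G} (t : X ⟶ pObj J Y) : Y ⟶ pObj J X :=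
  curry ((β_ X Y).hom ≫ uncurry t)

lemma uncurry_pTranspose {X Y : G} (t : X ⟶ pObj J Y) :
    uncurry (pTranspose J t) = (β_ X Y).hom ≫ uncurry t := by
  simp [pTranspose]

lemma uncurry_comp_pMap {T X E : G} (u : T ⟶ pObj J E) (f : X ⟶ E) :
    uncurry (u ≫ pMap J f) = (f ▷ T) ≫ uncurry u := by
  erw [pMap, uncurry_natural_left, uncurry_pre, uncurry_eq]
  exact whisker_exchange_assoc f u _

lemma uncurry_zero_pObj (X Y : G) : uncurry (0 : Y ⟶ pObj J X) = 0 := by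
  erw [uncurry_eq, MonoidalPreadditive.whiskerLeft_zero, zero_comp]

@[simp] lemma pTranspose_pTranspose {X Y : G} (t : X ⟶ pObj J Y) :
    pTranspose J (pTranspose J t) = t := by
  apply uncurry_injective
  rw [uncurry_pTranspose, uncurry_pTranspose, ← Category.assoc, SymmetricCategory.symmetry,
    Category.id_comp]

lemma comp_pTranspose {X Y Y' : G} (g : Y' ⟶ Y) (t : X ⟶ pObj J Y) :
    g ≫ pTranspose J t = pTranspose J (t ≫ pMap J g) := by
  apply uncurry_injective
  erw [uncurry_natural_left, uncurry_pTranspose, uncurry_pTranspose, uncurry_comp_pMap,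
    ← BraidedCategory.braiding_naturality_right_assoc]

lemma pTranspose_comp {X X' Y : G} (f : X' ⟶ X) (t : X ⟶ pObj J Y) :
    pTranspose J (f ≫ t) = pTranspose J t ≫ pMap J f := by
  apply uncurry_injective
  erw [uncurry_pTranspose, uncurry_comp_pMap, uncurry_pTranspose, uncurry_natural_left,
    ← BraidedCategory.braiding_naturality_left_assoc]

@[simp] lemma pTranspose_zero (X Y : G) : pTranspose J (0 : X ⟶ pObj J Y) = 0 := by
  apply uncurry_injective
  rw [uncurry_pTranspose, uncurry_zero_pObj, uncurry_zero_pObj, comp_zero]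

lemma bid_eq_pTranspose_id (X : G) : bid J X = pTranspose J (𝟙 (pObj J X)) := by
  unfold pTranspose bid pObj
  rw [uncurry_id_eq_ev]

@[simp] lemma pTranspose_bid (X : G) : pTranspose J (bid J X) = 𝟙 (pObj J X) := by
  rw [bid_eq_pTranspose_id, pTranspose_pTranspose]

lemma bid_comp_pMap_bid (X : G) : bid J (pObj J X) ≫ pMap J (bid J X) = 𝟙 (pObj J X) := by
  rw [bid_eq_pTranspose_id J (pObj J X), ← pTranspose_comp, Category.comp_id, pTranspose_bid]

lemma eq_zero_of_pMap_eq_zero (hJ : IsCoseparator J) {Z X : G} (w : Z ⟶ X)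
    (h : pMap J w = 0) : w = 0 := by
  refine hJ.def _ _ fun u => ?_
  -- `u : X ⟶ J` is tested through its name `𝟙_ G ⟶ X⁺`, on which `pMap J w` acts as `w ≫ u`.
  have hu : curry ((ρ_ X).hom ≫ u) ≫ pMap J w = curry ((ρ_ Z).hom ≫ w ≫ u) := by
    apply uncurry_injective
    erw [uncurry_comp_pMap, uncurry_curry, uncurry_curry, rightUnitor_naturality_assoc]
  erw [h, comp_zero] at hu
  have hu' := congrArg uncurry hu.symm
  rw [uncurry_curry, uncurry_zero_pObj] at hu'
  rw [zero_comp, ← cancel_epi (ρ_ Z).hom, hu', comp_zero]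

lemma mono_bid (hJ : IsCoseparator J) (X : G) : Mono (bid J X) := by
  refine Preadditive.mono_of_cancel_zero _ fun g hg => eq_zero_of_pMap_eq_zero J hJ g ?_
  have h := pTranspose_comp J g (bid J X)
  rwa [hg, pTranspose_zero, pTranspose_bid, Category.id_comp, eq_comm] at h

instance mono_pMap {E Y : G} (p : E ⟶ Y) [Epi p] : Mono (pMap J p) := by
  refine Preadditive.mono_of_cancel_zero _ fun u hu => ?_
  have h : pTranspose J u = 0 :=
    zero_of_epi_comp p (by rw [comp_pTranspose, hu, pTranspose_zero])
  rw [← pTranspose_pTranspose J u, h, pTranspose_zero]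

noncomputable def isLimitPMapOfIsColimit {X E Y : G} (f : X ⟶ E) (p : E ⟶ Y) [Epi p]
    (w : f ≫ p = 0) (hp : IsColimit (CokernelCofork.ofπ p w)) :
    IsLimit (KernelFork.ofι (pMap J p)
      (show pMap J p ≫ pMap J f = 0 by rw [← pMap_comp, w, pMap_zero])) := by
  refine KernelFork.IsLimit.ofι' _ _ fun {A} k hk => ?_
  obtain ⟨d, hd⟩ := CokernelCofork.IsColimit.desc' hp (pTranspose J k)
    (by rw [comp_pTranspose, hk, pTranspose_zero])
  refine ⟨pTranspose J d, ?_⟩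
  rw [Cofork.π_ofπ] at hd
  rw [← pTranspose_comp, hd, pTranspose_pTranspose]

end Transpose

section FunctorTranspose

variable (J : G) {D : Type v} [SmallCategory D]

noncomputable def dTranspose {X : D ⥤ G} {Y : Dᵒᵖ ⥤ G} :
    (X ⟶ opOp D ⋙ dObj J Y) ≃ (Y ⟶ dObj J X) where
  toFun η :=
    { app c := pTranspose J (η.app c.unop)
      naturality _ _ f := by
        erw [comp_pTranspose, ← pTranspose_comp, ← η.naturality f.unop]
        rfl }
  invFun θ :=
    { app c := pTranspose J (θ.app (Opposite.op c))
      naturality _ _ f := by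
        erw [comp_pTranspose, ← pTranspose_comp, ← θ.naturality f.op]
        rfl }
  left_inv η := by ext; exact pTranspose_pTranspose J _
  right_inv θ := by ext; exact pTranspose_pTranspose J _

lemma comp_dTranspose_symm {K E : D ⥤ G} {Y : Dᵒᵖ ⥤ G} (i : K ⟶ E) (θ : Y ⟶ dObj J E) :
    i ≫ (dTranspose J).symm θ = (dTranspose J).symm (θ ≫ dMap J i) := by
  ext c
  exact comp_pTranspose J _ _

lemma dTranspose_id_comp_dMap_phi (F : D ⥤ G) :
    dTranspose J (𝟙 (ddObj J F)) ≫ dMap J (phi J F) = 𝟙 (dObj J F) := by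
  ext c
  exact (congrArg (· ≫ pMap J _) (bid_eq_pTranspose_id J _).symm).trans (bid_comp_pMap_bid J _)

noncomputable def isLimitDMapOfIsColimit {F₁ F₂ F₃ : D ⥤ G} (η : F₁ ⟶ F₂) (q : F₂ ⟶ F₃)
    [Epi q] (w : η ≫ q = 0) (hq : IsColimit (CokernelCofork.ofπ q w)) :
    IsLimit (KernelFork.ofι (dMap J q)
      (show dMap J q ≫ dMap J η = 0 by rw [← dMap_comp, w, dMap_zero])) := by
  refine evaluationJointlyReflectsLimits _ fun c => ?_
  have hqc : IsColimit (CokernelCofork.ofπ (q.app c.unop)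
      (show η.app c.unop ≫ q.app c.unop = 0 by rw [← NatTrans.comp_app, w]; rfl)) :=
    isColimitCoforkMapOfIsColimit' ((evaluation D G).obj c.unop) w hq
  exact (isLimitMapConeForkEquiv' ((evaluation Dᵒᵖ G).obj c) _).symm
    (isLimitPMapOfIsColimit J _ _ _ hqc)

end FunctorTranspose

section Purity

variable (J : G) {D : Type v} [SmallCategory D]

lemma isPure_of_comp_dMap_f_eq_id {S : ShortComplex (D ⥤ G)} (hS : S.ShortExact)
    (s : dObj J S.X₁ ⟶ dObj J S.X₂) (hs : s ≫ dMap J S.f = 𝟙 _) : IsPure J S := by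
  have := hS.epi_g
  have hker := isLimitDMapOfIsColimit J S.f S.g S.zero hS.gIsCokernel
  exact ⟨.ofExactOfSection _ (ShortComplex.exact_of_f_is_kernel _ hker) s hs
    (mono_of_isLimit_fork hker)⟩

lemma isPureInjective_dual (Y : Dᵒᵖ ⥤ G) : IsPureInjective J (opOp D ⋙ dObj J Y) := by
  rintro K E L i p w - ⟨σ⟩ f
  obtain ⟨s, hs⟩ : ∃ s : dObj J K ⟶ dObj J E, s ≫ dMap J i = 𝟙 _ := ⟨σ.s, σ.s_g⟩
  refine ⟨(dTranspose J).symm (dTranspose J f ≫ s), ?_⟩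
  rw [comp_dTranspose_symm, Category.assoc, hs, Category.comp_id, Equiv.symm_apply_apply]

lemma mono_phi (hJ : IsCoseparator J) (F : D ⥤ G) : Mono (phi J F) :=
  have (c : D) : Mono ((phi J F).app c) := mono_bid J hJ (F.obj c)
  NatTrans.mono_of_mono_app _

lemma shortExact_phi (hJ : IsCoseparator J) (F : D ⥤ G) :
    (ShortComplex.mk (phi J F) (cokernel.π (phi J F)) (cokernel.condition (phi J F))).ShortExact :=
  .mk' (ShortComplex.exact_of_g_is_cokernel _ (cokernelIsCokernel _)) (mono_phi J hJ F)
    (inferInstanceAs (Epi (cokernel.π _)))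

lemma isPure_phi (hJ : IsCoseparator J) (F : D ⥤ G) :
    IsPure J (ShortComplex.mk (phi J F) (cokernel.π (phi J F))
      (cokernel.condition (phi J F))) :=
  isPure_of_comp_dMap_f_eq_id J (shortExact_phi J hJ F) _ (dTranspose_id_comp_dMap_phi J F)

end Purity

section Statement

variable {C : Type v} [SmallCategory C]
variable [HasLimits G] [HasColimits G] [AB5 G] [HasSeparator G]


theorem statement0_general (J : G) (hJ : IsCoseparator J) :
    (∀ F : C ⥤ G,
      (Mono (phi J F) ∧
        IsPure J (ShortComplex.mk (phi J F) (cokernel.π (phi J F))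
          (cokernel.condition (phi J F)))) ∧
      IsPureInjective J (ddObj J F)) ∧
    (∀ F : C ⥤ G, ∃ (P : C ⥤ G) (u : F ⟶ P), IsPureInjective J P ∧
      ∀ (Q : C ⥤ G), IsPureInjective J Q → ∀ v : F ⟶ Q, ∃ w : P ⟶ Q, u ≫ w = v) := by
  refine ⟨fun F => ⟨⟨mono_phi J hJ F, isPure_phi J hJ F⟩, isPureInjective_dual J (dObj J F)⟩,
    fun F => ⟨ddObj J F, phi J F, isPureInjective_dual J (dObj J F), fun Q hQ v => ?_⟩⟩
  exact hQ _ _ _ (shortExact_phi J hJ F) (isPure_phi J hJ F) v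

/-- For every functor `F` in `A = Fun(C, G)`, the canonical morphism `φ_F : F ⟶ F⁺⁺` is a
pure monomorphism and `F⁺⁺` is pure injective; consequently, every functor in `A` has a
pure injective preenvelope. -/
theorem statement0 (J : G) [Injective J] (hJ : IsCoseparator J) :
    (∀ F : C ⥤ G,
      (Mono (phi J F) ∧
        IsPure J (ShortComplex.mk (phi J F) (cokernel.π (phi J F))
          (cokernel.condition (phi J F)))) ∧
      IsPureInjective J (ddObj J F)) ∧
    (∀ F : C ⥤ G, ∃ (P : C ⥤ G) (u : F ⟶ P), IsPureInjective J P ∧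
      ∀ (Q : C ⥤ G), IsPureInjective J Q → ∀ v : F ⟶ Q, ∃ w : P ⟶ Q, u ≫ w = v) :=
  statement0_general J hJ

end Statement

end FlatFunctorsPaper
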